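/- Consider an MDP whose transition dynamics have multiplicative action variation δ_P, i.e., P_h(x'|x,a) ≤ δ_P · P_h(x'|x,a') for all x, x', a, a', h. Let π̃ be any policy satisfying π̃_h(a|x) ≥ ε/A for all x, a, h. Then for every policy π, every step h, and every state-action pair (x,a), the occupancy measures satisfy μ^π_h(x,a) ≤ (A δ_P^{H}/ε) · μ^{π̃}_h(x,a). -/

import Mathlib

open Finset

noncomputable section

variable {X A : Type*}

/-- State occupancy measure of policy `π` at step `h`, started at `x1` at step 0. -/
def occ [Fintype X] [Fintype A] [DecidableEq X] (P : ℕ → X → A → X → ℝ)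
    (π : ℕ → X → A → ℝ) (x1 : X) : ℕ → X → ℝ
  | 0 => fun x => if x = x1 then 1 else 0
  | h + 1 => fun x' => ∑ x, ∑ a, occ P π x1 h x * π h x a * P h x a x'

/-- State-action occupancy measure `μ^π_h(x,a)`. -/
def occSA [Fintype X] [Fintype A] [DecidableEq X] (P : ℕ → X → A → X → ℝ)
    (π : ℕ → X → A → ℝ) (x1 : X) (h : ℕ) (x : X) (a : A) : ℝ :=
  occ P π x1 h x * π h x a

/-! Each step of the occupancy recursion averages the transition kernel over the policy's action
distribution. By the multiplicative action variation, swapping `π` for `πt` changes that average by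
at most the factor `δ`, so the state occupancies satisfy `occ π h ≤ δ ^ h * occ πt h`. The action
factor costs `π h x a ≤ 1 ≤ (A / ε) * πt h x a`. -/

theorem sum_mul_le_mul_sum_mul_of_le_mul {ι : Type*} [Fintype ι] {w w' f : ι → ℝ} {δ : ℝ}
    (hw0 : ∀ i, 0 ≤ w i) (hw : ∑ i, w i = 1) (hw'0 : ∀ i, 0 ≤ w' i) (hw' : ∑ i, w' i = 1)
    (hf : ∀ i j, f i ≤ δ * f j) :
    ∑ i, w i * f i ≤ δ * ∑ j, w' j * f j := by
  have hle : ∀ j, ∑ i, w i * f i ≤ δ * f j := fun j =>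
    calc ∑ i, w i * f i ≤ ∑ i, w i * (δ * f j) := by gcongr with i; exacts [hw0 i, hf i j]
      _ = δ * f j := by rw [← sum_mul, hw, one_mul]
  calc ∑ i, w i * f i = ∑ j, w' j * ∑ i, w i * f i := by rw [← sum_mul, hw', one_mul]
    _ ≤ ∑ j, w' j * (δ * f j) := by gcongr with j; exacts [hw'0 j, hle j]
    _ = δ * ∑ j, w' j * f j := by rw [mul_sum]; exact sum_congr rfl fun j _ => mul_left_comm ..

section Occupancy

variable [Fintype X] [Fintype A] [DecidableEq X] (P : ℕ → X → A → X → ℝ) (x1 : X)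

theorem occ_succ (π : ℕ → X → A → ℝ) (h : ℕ) (x' : X) :
    occ P π x1 (h + 1) x' = ∑ x, occ P π x1 h x * ∑ a, π h x a * P h x a x' := by
  simp only [occ, mul_sum, mul_assoc]

variable {P}

theorem occ_nonneg {π : ℕ → X → A → ℝ} (hP0 : ∀ h x a x', 0 ≤ P h x a x')
    (hπ0 : ∀ h x a, 0 ≤ π h x a) (h : ℕ) (x : X) : 0 ≤ occ P π x1 h x := by
  induction h generalizing x with
  | zero => simp only [occ]; split_ifs <;> norm_num
  | succ h ih =>
    rw [occ_succ]
    exact sum_nonneg fun y _ => mul_nonneg (ih y)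
      (sum_nonneg fun a _ => mul_nonneg (hπ0 h y a) (hP0 h y a x))

theorem occ_le_pow_mul_occ {δ : ℝ} (hδ : 0 ≤ δ) (hP0 : ∀ h x a x', 0 ≤ P h x a x')
    (hav : ∀ h x x' a a', P h x a x' ≤ δ * P h x a' x') {π πt : ℕ → X → A → ℝ}
    (hπ0 : ∀ h x a, 0 ≤ π h x a) (hπsum : ∀ h x, ∑ a, π h x a = 1)
    (hπt0 : ∀ h x a, 0 ≤ πt h x a) (hπtsum : ∀ h x, ∑ a, πt h x a = 1) (h : ℕ) (x : X) :
    occ P π x1 h x ≤ δ ^ h * occ P πt x1 h x := by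
  induction h generalizing x with
  | zero => simp [occ]
  | succ h ih =>
    have hstep : ∀ y, ∑ a, π h y a * P h y a x ≤ δ * ∑ a, πt h y a * P h y a x := fun y =>
      sum_mul_le_mul_sum_mul_of_le_mul (hπ0 h y) (hπsum h y) (hπt0 h y) (hπtsum h y)
        fun a a' => hav h y x a a'
    calc occ P π x1 (h + 1) x
        ≤ ∑ y, δ ^ h * occ P πt x1 h y * (δ * ∑ a, πt h y a * P h y a x) := by
          rw [occ_succ]
          gcongr with y
          · exact sum_nonneg fun a _ => mul_nonneg (hπ0 h y a) (hP0 h y a x)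
          · exact mul_nonneg (pow_nonneg hδ h) (occ_nonneg x1 hP0 hπt0 h y)
          · exact ih y
          · exact hstep y
      _ = δ ^ (h + 1) * occ P πt x1 (h + 1) x := by
          rw [occ_succ, mul_sum]; exact sum_congr rfl fun y _ => by ring

end Occupancy

theorem occupancy_multiplicative_action_variation_general
    [Fintype X] [Fintype A] [DecidableEq X]
    (H : ℕ) (P : ℕ → X → A → X → ℝ) (x1 : X) (δ ε : ℝ)
    (hδ : 1 ≤ δ) (hε : 0 < ε)
    (hP0 : ∀ h x a x', 0 ≤ P h x a x')
    (hav : ∀ h x x' a a', P h x a x' ≤ δ * P h x a' x')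
    (π πt : ℕ → X → A → ℝ)
    (hπ0 : ∀ h x a, 0 ≤ π h x a) (hπsum : ∀ h x, ∑ a, π h x a = 1)
    (hπt0 : ∀ h x a, 0 ≤ πt h x a) (hπtsum : ∀ h x, ∑ a, πt h x a = 1)
    (hπtlb : ∀ h x a, ε / Fintype.card A ≤ πt h x a) :
    ∀ h ≤ H, ∀ x a,
      occSA P π x1 h x a ≤
        ((Fintype.card A : ℝ) * δ ^ H / ε) * occSA P πt x1 h x a := by
  intro h hH x a
  have hA : (0 : ℝ) < Fintype.card A := Nat.cast_pos.mpr (Fintype.card_pos_iff.mpr ⟨a⟩)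
  have hπt_occ0 : 0 ≤ occ P πt x1 h x := occ_nonneg x1 hP0 hπt0 h x
  have hocc : occ P π x1 h x ≤ δ ^ H * occ P πt x1 h x :=
    calc occ P π x1 h x ≤ δ ^ h * occ P πt x1 h x :=
          occ_le_pow_mul_occ x1 (zero_le_one.trans hδ) hP0 hav hπ0 hπsum hπt0 hπtsum h x
      _ ≤ δ ^ H * occ P πt x1 h x := by gcongr
  have hπ : π h x a ≤ Fintype.card A / ε * πt h x a :=
    calc π h x a ≤ 1 := hπsum h x ▸ single_le_sum (fun b _ => hπ0 h x b) (mem_univ a)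
      _ = Fintype.card A / ε * (ε / Fintype.card A) := by field_simp
      _ ≤ Fintype.card A / ε * πt h x a := by gcongr; exact hπtlb h x a
  calc occSA P π x1 h x a ≤ (δ ^ H * occ P πt x1 h x) * (Fintype.card A / ε * πt h x a) :=
        mul_le_mul hocc hπ (hπ0 h x a) (mul_nonneg (pow_nonneg (zero_le_one.trans hδ) H) hπt_occ0)
    _ = ((Fintype.card A : ℝ) * δ ^ H / ε) * occSA P πt x1 h x a := by
        unfold occSA; ring

/-- If the transition dynamics have multiplicative action variation `δ`
(`P_h(x'|x,a) ≤ δ · P_h(x'|x,a')` for all `x, x', a, a', h`) and the exploration policy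
`πt` puts probability at least `ε/A` on every action, then for every policy `π`, step
`h ≤ H` and pair `(x,a)`, `μ^π_h(x,a) ≤ (A δ^H / ε) · μ^{πt}_h(x,a)`. -/
theorem occupancy_multiplicative_action_variation
    [Fintype X] [Fintype A] [DecidableEq X]
    (H : ℕ) (P : ℕ → X → A → X → ℝ) (x1 : X) (δ ε : ℝ)
    (hδ : 1 ≤ δ) (hε : 0 < ε)
    (hP0 : ∀ h x a x', 0 ≤ P h x a x')
    (hPsum : ∀ h x a, ∑ x', P h x a x' = 1)
    (hav : ∀ h x x' a a', P h x a x' ≤ δ * P h x a' x')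
    (π πt : ℕ → X → A → ℝ)
    (hπ0 : ∀ h x a, 0 ≤ π h x a) (hπsum : ∀ h x, ∑ a, π h x a = 1)
    (hπt0 : ∀ h x a, 0 ≤ πt h x a) (hπtsum : ∀ h x, ∑ a, πt h x a = 1)
    (hπtlb : ∀ h x a, ε / Fintype.card A ≤ πt h x a) :
    ∀ h ≤ H, ∀ x a,
      occSA P π x1 h x a ≤
        ((Fintype.card A : ℝ) * δ ^ H / ε) * occSA P πt x1 h x a :=
  occupancy_multiplicative_action_variation_general H P x1 δ ε hδ hε hP0 hav π πt hπ0 hπsum hπt0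
    hπtsum hπtlb

end
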